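/- arXiv:2503.09421 — 2 statements merged into one kernel-verified Lean document; each statement's English description precedes it below -/
import Mathlib

section
/- Let V be a unitary operator, z ∈ ℂ with |z| > 1 and |z| ≠ 0, and P an orthogonal projection. Define F = P(V + z)(V - z)⁻¹P as an operator on the range of P. Then F + F* = 2(1 - |z|²) P(V - z)⁻¹((V - z)⁻¹)*P, and in particular F + F* is negative definite, so -iF is dissipative (has positive imaginary part). -/
/-- Let `V` be unitary, `z ∈ ℂ` with `|z| > 1`, and `P` an orthogonal projection.  Define
`F = P (V + z)(V - z)⁻¹ P`, viewed as an operator on the range of `P`.  Then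
`F + F* = 2(1 - |z|²) P (V - z)⁻¹ ((V - z)⁻¹)* P`, and in particular `F + F*` is negative
definite on the range of `P`, i.e. `-iF` is dissipative there. -/
theorem stmt2 {H : Type*} [NormedAddCommGroup H] [InnerProductSpace ℂ H] [CompleteSpace H]
    (V : H →L[ℂ] H) (hV : V ∈ unitary (H →L[ℂ] H))
    (z : ℂ) (hz : 1 < ‖z‖)
    (P : H →L[ℂ] H) (hPproj : P * P = P) (hPsa : IsSelfAdjoint P)
    (R : H →L[ℂ] H) (hR1 : (V - z • 1) * R = 1) (hR2 : R * (V - z • 1) = 1)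
    (F : H →L[ℂ] H) (hF : F = P * ((V + z • 1) * R) * P) :
    F + star F = ((2 * (1 - ‖z‖ ^ 2) : ℝ) : ℂ) • (P * (R * star R) * P) ∧
      ∀ x ∈ Set.range P, x ≠ 0 → (inner ℂ x ((F + star F) x) : ℂ).re < 0 := by
  set c : ℂ := starRingEnd ℂ z with hc
  have hVV : star V * V = 1 := (Unitary.mem_iff.mp hV).1
  have hVV' : V * star V = 1 := (Unitary.mem_iff.mp hV).2
  have hstar_lin : star (V - z • 1) = star V - c • 1 := by
    simp [star_sub, star_smul, hc]
  have hsR1 : star R * (star V - c • 1) = 1 := by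
    rw [← hstar_lin, ← star_mul, hR1, star_one]
  have hsR2 : (star V - c • 1) * star R = 1 := by
    rw [← hstar_lin, ← star_mul, hR2, star_one]
  have hcz : c * z = ((‖z‖ ^ 2 : ℝ) : ℂ) := by
    rw [hc, ← Complex.normSq_eq_conj_mul_self]
    simp [Complex.normSq_eq_norm_sq]
  -- commuting inverses: star R * R = R * star R
  have hcomm : (V - z • 1) * (star V - c • 1) = (star V - c • 1) * (V - z • 1) := by
    simp only [mul_sub, sub_mul, hVV, hVV', smul_mul_assoc, mul_smul_comm, one_mul, mul_one]
    module
  have hRRs : star R * R = R * star R := by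
    have h1 : (star R * R) * ((V - z • 1) * (star V - c • 1)) = 1 := by
      rw [mul_assoc (star R) R, ← mul_assoc R, hR2, one_mul, hsR1]
    have h2 : ((V - z • 1) * (star V - c • 1)) * (R * star R) = 1 := by
      rw [hcomm, mul_assoc, ← mul_assoc (V - z • 1), hR1, one_mul, hsR2]
    calc star R * R = (star R * R) * (((V - z • 1) * (star V - c • 1)) * (R * star R)) := by
            rw [h2, mul_one]
      _ = ((star R * R) * ((V - z • 1) * (star V - c • 1))) * (R * star R) := by
            simp only [mul_assoc]
      _ = R * star R := by rw [h1, one_mul]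
  -- key middle identity
  have hmid : (star V - c • 1) * (V + z • 1) + (star V + c • 1) * (V - z • 1)
      = ((2 * (1 - ‖z‖ ^ 2) : ℝ) : ℂ) • 1 := by
    have : (star V - c • 1) * (V + z • 1) + (star V + c • 1) * (V - z • 1)
        = (2 : ℂ) • (star V * V) - ((2 : ℂ) * (c * z)) • 1 := by
      simp only [mul_add, add_mul, sub_mul, mul_sub, smul_mul_assoc, mul_smul_comm,
        smul_smul, one_mul, mul_one]
      module
    rw [this, hVV, hcz]
    push_cast
    rw [← sub_smul]
    congr 1
    ring
  have hkey : (V + z • 1) * R + star R * (star V + c • 1)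
      = ((2 * (1 - ‖z‖ ^ 2) : ℝ) : ℂ) • (star R * R) := by
    have e1 : (V + z • 1) * R = star R * ((star V - c • 1) * (V + z • 1)) * R := by
      rw [← mul_assoc, hsR1, one_mul]
    have e2 : star R * (star V + c • 1) = star R * ((star V + c • 1) * (V - z • 1)) * R := by
      rw [mul_assoc, mul_assoc, hR1, mul_one]
    rw [e1, e2, ← add_mul, ← mul_add, hmid]
    simp [mul_smul_comm, smul_mul_assoc]
  have hstarF : star F = P * (star R * (star V + c • 1)) * P := by
    rw [hF]
    simp only [star_mul, hPsa.star_eq, star_add, star_smul, star_one, mul_assoc, hc, Complex.star_def]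
  have hmain : F + star F = ((2 * (1 - ‖z‖ ^ 2) : ℝ) : ℂ) • (P * (R * star R) * P) := by
    rw [hstarF, hF, ← hRRs]
    have hsw : ((2 * (1 - ‖z‖ ^ 2) : ℝ) : ℂ) • (P * (star R * R) * P)
        = P * (((2 * (1 - ‖z‖ ^ 2) : ℝ) : ℂ) • (star R * R)) * P := by
      simp only [mul_smul_comm, smul_mul_assoc]
    rw [hsw, ← hkey]
    simp only [mul_add, add_mul]
  refine ⟨hmain, ?_⟩
  intro x hx hx0
  obtain ⟨y, hy⟩ := hx
  have hPx : P x = x := by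
    rw [← hy]; show (P * P) y = P y; rw [hPproj]
  have happ : (F + star F) x
      = ((2 * (1 - ‖z‖ ^ 2) : ℝ) : ℂ) • (P (R (star R x))) := by
    rw [hmain]
    simp [ContinuousLinearMap.mul_apply, hPx]
  rw [happ]
  rw [inner_smul_right]
  have hPinner : (inner ℂ x (P (R (star R x))) : ℂ) = inner ℂ x (R (star R x)) := by
    rw [← ContinuousLinearMap.adjoint_inner_left P, ← ContinuousLinearMap.star_eq_adjoint,
      hPsa.star_eq, hPx]
  have hRinner : (inner ℂ x (R (star R x)) : ℂ) = ((‖star R x‖ : ℝ) : ℂ) ^ 2 := by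
    rw [← ContinuousLinearMap.adjoint_inner_left R, ← ContinuousLinearMap.star_eq_adjoint]
    exact inner_self_eq_norm_sq_to_K _
  rw [hPinner, hRinner]
  have hne : star R x ≠ 0 := by
    intro h
    apply hx0
    have : (star V - c • 1) ((star R) x) = x := by
      rw [← ContinuousLinearMap.mul_apply, hsR2, ContinuousLinearMap.one_apply]
    rw [h, map_zero] at this
    exact this.symm
  have hn0 : 0 < ‖star R x‖ := norm_pos_iff.mpr hne
  have hpos : 0 < ‖star R x‖ ^ 2 := by positivity
  have hneg : 2 * (1 - ‖z‖ ^ 2) < 0 := by nlinarith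
  rw [← Complex.ofReal_pow, ← Complex.ofReal_mul, Complex.ofReal_re]
  exact mul_neg_of_neg_of_pos hneg hpos
end

section
/- For all x ∈ [0,1], sup over y ∈ (0, 1/2) of |(1 - xy)^{1/y} - 1 + x| ≤ x²/2. -/
/-!
Bernoulli's inequality `(1 - x) ^ y ≤ 1 - x y` for `y ≤ 1` gives `1 - x ≤ (1 - x y) ^ (1 / y)`,
while `1 - t ≤ exp (-t)` gives `(1 - x y) ^ (1 / y) ≤ exp (-x) ≤ 1 - x + x ^ 2 / 2`.
-/

open Real

theorem Real.exp_neg_le_one_sub_add_sq_div_two {x : ℝ} (hx : 0 ≤ x) :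
    exp (-x) ≤ 1 - x + x ^ 2 / 2 := by
  have hquad : 1 + x + x ^ 2 / 2 ≤ exp x := quadratic_le_exp_of_nonneg hx
  have hinv : exp (-x) * exp x = 1 := by rw [← exp_add, neg_add_cancel, exp_zero]
  -- `(1 - x + x²/2)(1 + x + x²/2) = 1 + x⁴/4 ≥ 1 = exp (-x) * exp x`
  nlinarith [exp_pos (-x), sq_nonneg (x ^ 2)]

theorem Real.one_sub_le_rpow_one_sub_mul_one_div {x y : ℝ} (hx1 : x ≤ 1) (hy0 : 0 < y) (hy1 : y ≤ 1) :
    1 - x ≤ (1 - x * y) ^ (1 / y) := by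
  have hbernoulli : (1 - x) ^ y ≤ 1 - x * y := by
    have := rpow_one_add_le_one_add_mul_self (s := -x) (by linarith) hy0.le hy1
    rw [← sub_eq_add_neg] at this
    linarith
  calc 1 - x = ((1 - x) ^ y) ^ (1 / y) := by
        rw [← rpow_mul (by linarith), mul_one_div_cancel hy0.ne', rpow_one]
    _ ≤ (1 - x * y) ^ (1 / y) :=
        rpow_le_rpow (rpow_nonneg (by linarith) y) hbernoulli (by positivity)

theorem Real.rpow_one_sub_mul_one_div_le_exp_neg {x y : ℝ} (hxy : 0 ≤ 1 - x * y) (hy : 0 < y) :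
    (1 - x * y) ^ (1 / y) ≤ exp (-x) :=
  calc (1 - x * y) ^ (1 / y) ≤ exp (-(x * y)) ^ (1 / y) :=
        rpow_le_rpow hxy (one_sub_le_exp_neg _) (by positivity)
    _ = exp (-x) := by rw [← exp_mul]; field_simp

/-- For all `x ∈ [0,1]` and `y ∈ (0, 1/2)`, `|(1 - xy)^{1/y} - 1 + x| ≤ x²/2`. -/
theorem stmt13 (x : ℝ) (hx : x ∈ Set.Icc (0 : ℝ) 1) (y : ℝ) (hy : y ∈ Set.Ioo (0 : ℝ) (1 / 2)) :
    |(1 - x * y) ^ (1 / y) - 1 + x| ≤ x ^ 2 / 2 := by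
  obtain ⟨hx0, hx1⟩ := hx
  obtain ⟨hy0, hy2⟩ := hy
  have hlower := one_sub_le_rpow_one_sub_mul_one_div hx1 hy0 (by linarith)
  have hupper := (rpow_one_sub_mul_one_div_le_exp_neg (by nlinarith) hy0).trans
    (exp_neg_le_one_sub_add_sq_div_two hx0)
  rw [abs_le]
  constructor <;> linarith [sq_nonneg x]
end
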